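/- arXiv:2507.18776 — 3 statements merged into one kernel-verified Lean document; each statement's English description precedes it below -/
import Mathlib

section
/- Let G be a regular K3-irregular simple graph, let v be a vertex of G, and let B = V(G) \ N[v] be the set of vertices outside the closed neighborhood of v. Then every vertex b ∈ B has at least one neighbor in B (i.e., the subgraph induced on B has no isolated vertices). -/
/-!
If a vertex `b ∉ N[v]` had no neighbour outside `N[v]`, then `N(b) ⊆ N(v)`, and regularity
forces `N(b) = N(v)`. Swapping two vertices with the same neighbourhood is an automorphism of `G`,
and automorphisms preserve triangle-degrees, so `b` and `v` would have the same `K₃`-degree.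
-/

/-- The `K₃`-degree (triangle-degree) of a vertex `v` in a finite simple graph `G`:
the number of triangles (3-cliques) of `G` containing `v`. -/
def K3deg {V : Type*} (G : SimpleGraph V) [Fintype V] [DecidableEq V] [DecidableRel G.Adj]
    (v : V) : ℕ :=
  ((G.cliqueFinset 3).filter (fun t => v ∈ t)).card

namespace SimpleGraph

variable {V W : Type*} {G : SimpleGraph V} {H : SimpleGraph W}

theorem IsNClique.map_embedding {n : ℕ} {s : Finset V} (f : G ↪g H) (h : G.IsNClique n s) :
    H.IsNClique n (s.map f.toEmbedding) := by
  refine ⟨?_, (Finset.card_map _).trans h.card_eq⟩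
  rw [Finset.coe_map]
  rintro _ ⟨x, hx, rfl⟩ _ ⟨y, hy, rfl⟩ hxy
  exact f.map_adj_iff.mpr (h.isClique hx hy fun hxy' => hxy (congrArg f hxy'))

theorem K3deg_iso [Fintype V] [DecidableEq V] [DecidableRel G.Adj] [Fintype W] [DecidableEq W]
    [DecidableRel H.Adj] (φ : G ≃g H) (v : V) : K3deg H (φ v) = K3deg G v := by
  unfold K3deg
  refine Finset.card_nbij' (·.map φ.symm.toEmbedding.toEmbedding)
    (·.map φ.toEmbedding.toEmbedding) ?_ ?_ ?_ ?_
  · intro t ht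
    simp only [Finset.coe_filter, Set.mem_ofPred_eq, mem_cliqueFinset_iff] at ht ⊢
    exact ⟨ht.1.map_embedding φ.symm.toEmbedding,
      Finset.mem_map.mpr ⟨_, ht.2, φ.symm_apply_apply v⟩⟩
  · intro t ht
    simp only [Finset.coe_filter, Set.mem_ofPred_eq, mem_cliqueFinset_iff] at ht ⊢
    exact ⟨ht.1.map_embedding φ.toEmbedding, Finset.mem_map_of_mem _ ht.2⟩
  all_goals intro t _; simp [Finset.map_map]

def Iso.swapOfNeighborSetEq [DecidableEq V] {u w : V} (h : G.neighborSet u = G.neighborSet w) :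
    G ≃g G where
  toEquiv := Equiv.swap u w
  map_rel_iff' {a b} := by
    have hl : ∀ x, G.Adj u x ↔ G.Adj w x := fun x => Set.ext_iff.mp h x
    have hr : ∀ x, G.Adj x u ↔ G.Adj x w := fun x => by rw [adj_comm, hl, adj_comm]
    simp only [Equiv.swap_apply_def]
    split_ifs <;> subst_vars <;> simp_all

theorem Iso.swapOfNeighborSetEq_apply_left [DecidableEq V] {u w : V}
    (h : G.neighborSet u = G.neighborSet w) : Iso.swapOfNeighborSetEq h u = w :=
  Equiv.swap_apply_left u w

theorem K3deg_eq_of_neighborSet_eq [Fintype V] [DecidableEq V] [DecidableRel G.Adj] {u w : V}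
    (h : G.neighborSet u = G.neighborSet w) : K3deg G u = K3deg G w := by
  rw [← K3deg_iso (Iso.swapOfNeighborSetEq h) u, Iso.swapOfNeighborSetEq_apply_left]

theorem IsRegularOfDegree.neighborSet_eq_of_subset [Fintype V] [DecidableRel G.Adj] {r : ℕ}
    (hG : G.IsRegularOfDegree r) {u w : V} (h : G.neighborSet u ⊆ G.neighborSet w) :
    G.neighborSet u = G.neighborSet w := by
  have hfin : G.neighborFinset u ⊆ G.neighborFinset w := by
    simpa [← Finset.coe_subset] using h
  simpa using congrArg ((↑) : Finset V → Set V)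
    (Finset.eq_of_subset_of_card_le hfin (by simp [hG.degree_eq]))

end SimpleGraph

open SimpleGraph in
theorem stmt6 {V : Type*} [Fintype V] [DecidableEq V] (G : SimpleGraph V) [DecidableRel G.Adj]
    (hreg : ∃ r : ℕ, G.IsRegularOfDegree r)
    (hirr : ∀ u w : V, K3deg G u = K3deg G w → u = w)
    (v : V) (B : Finset V) (hB : B = Finset.univ \ insert v (G.neighborFinset v))
    (b : V) (hb : b ∈ B) :
    ∃ b' ∈ B, G.Adj b b' := by
  by_contra! hisolated
  obtain ⟨r, hr⟩ := hreg
  simp only [hB, Finset.mem_sdiff, Finset.mem_univ, Finset.mem_insert, mem_neighborFinset,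
    true_and, not_or] at hb hisolated
  obtain ⟨hbv, hvb⟩ := hb
  have hsub : G.neighborSet b ⊆ G.neighborSet v := fun x hbx => by
    by_contra hvx
    exact hisolated x ⟨fun hxv => hvb (hxv ▸ hbx.symm), hvx⟩ hbx
  exact hbv (hirr b v (K3deg_eq_of_neighborSet_eq (hr.neighborSet_eq_of_subset hsub)))
end

section
/- Let G be an r-regular K3-irregular simple graph on n vertices. Then for every vertex v of G, the K3-degree of v satisfies, as an inequality of integers, 2·K3deg(v) + nr − 2r² ≥ n − r − 1 (equivalently, K3deg(v) ≥ ⌈(n − r − 1)/2⌉ − nr/2 + r²). -/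
/-!
Let `N` be the neighbourhood of `v` and `O` the set of vertices outside `N ∪ {v}`, so that
`|O| = n - r - 1`. Twice the triangle degree of `v` is the number of ordered edges inside `N`, so
by `r`-regularity there are `r² - r - 2·K3deg v` ordered edges from `N` to `O`, and hence
`r(n - r - 1) - (r² - r - 2·K3deg v)` non-edges. A vertex `w ∈ O` adjacent to all of `N` would
have `N(w) = N(v)` by regularity, hence the same triangle degree as `v`. So by irregularity every
`w ∈ O` has a non-neighbour in `N`, and `|O|` is at most the number of non-edges.
-/

open Finset

namespace SimpleGraph

variable {V : Type*} (G : SimpleGraph V) [DecidableRel G.Adj]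

lemma card_interedges_union_right [DecidableEq V] (s : Finset V) {t t' : Finset V}
    (h : Disjoint t t') :
    #(G.interedges s (t ∪ t')) = #(G.interedges s t) + #(G.interedges s t') := by
  rw [← card_union_of_disjoint (G.interedges_disjoint_right s h)]
  congr 1
  ext ⟨a, b⟩
  simp only [mk_mem_interedges_iff, mem_union]
  tauto

variable [Fintype V]

lemma card_interedges_univ_right (s : Finset V) :
    #(G.interedges s univ) = ∑ u ∈ s, G.degree u := by
  rw [interedges_def, card_filter, sum_product]
  refine sum_congr rfl fun u _ => ?_
  rw [← card_neighborFinset_eq_degree, ← card_filter]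
  congr 1
  ext w
  simp

variable [DecidableEq V]

lemma card_interedges_neighborFinset_singleton (v : V) :
    #(G.interedges (G.neighborFinset v) {v}) = G.degree v := by
  rw [← card_neighborFinset_eq_degree]
  have : G.interedges (G.neighborFinset v) {v} = (G.neighborFinset v).image (·, v) := by
    ext ⟨a, b⟩
    simp only [mk_mem_interedges_iff, mem_neighborFinset, mem_singleton, mem_image]
    exact ⟨fun ⟨hva, hb, _⟩ => ⟨a, hva, by rw [hb]⟩,
      fun ⟨u, hvu, hu⟩ => by cases hu; exact ⟨hvu, rfl, hvu.symm⟩⟩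
  rw [this, card_image_of_injective _ (Prod.mk_left_injective v)]

lemma interedges_neighborFinset_filter_insert_eq_offDiag {v : V} {t : Finset V}
    (ht : G.IsNClique 3 t) (hv : v ∈ t) :
    {p ∈ G.interedges (G.neighborFinset v) (G.neighborFinset v) | insert v {p.1, p.2} = t} =
      (t.erase v).offDiag := by
  ext ⟨a, b⟩
  simp only [mem_filter, mk_mem_interedges_iff, mem_neighborFinset, mem_offDiag, mem_erase]
  constructor
  · rintro ⟨⟨hva, hvb, hab⟩, rfl⟩
    exact ⟨⟨hva.ne', by simp⟩, ⟨hvb.ne', by simp⟩, hab.ne⟩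
  · rintro ⟨⟨hav, ha⟩, ⟨hbv, hb⟩, hab⟩
    refine ⟨⟨ht.isClique hv ha (Ne.symm hav), ht.isClique hv hb (Ne.symm hbv),
      ht.isClique ha hb hab⟩, eq_of_subset_of_card_le ?_ ?_⟩
    · simp [insert_subset_iff, hv, ha, hb]
    · rw [ht.card_eq]
      exact (card_eq_three.mpr ⟨v, a, b, Ne.symm hav, Ne.symm hbv, hab, rfl⟩).ge

lemma two_mul_K3deg_eq_card_interedges (v : V) :
    2 * K3deg G v = #(G.interedges (G.neighborFinset v) (G.neighborFinset v)) := by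
  have hmaps : Set.MapsTo (fun p : V × V => insert v {p.1, p.2})
      (G.interedges (G.neighborFinset v) (G.neighborFinset v))
      (((G.cliqueFinset 3).filter (v ∈ ·) : Finset (Finset V)) : Set (Finset V)) := by
    rintro ⟨a, b⟩ hp
    simp only [mem_coe, mk_mem_interedges_iff, mem_neighborFinset] at hp
    simp [is3Clique_triple_iff, hp.1, hp.2.1, hp.2.2]
  rw [card_eq_sum_card_fiberwise hmaps, K3deg, mul_comm, ← smul_eq_mul, ← sum_const]
  refine sum_congr rfl fun t ht => ?_
  rw [mem_filter, mem_cliqueFinset_iff] at ht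
  rw [G.interedges_neighborFinset_filter_insert_eq_offDiag ht.1 ht.2, offDiag_card,
    card_erase_of_mem ht.2, ht.1.card_eq]

lemma K3deg_eq_of_neighborFinset_eq {v w : V} (h : G.neighborFinset v = G.neighborFinset w) :
    K3deg G v = K3deg G w := by
  have hv := G.two_mul_K3deg_eq_card_interedges v
  have hw := G.two_mul_K3deg_eq_card_interedges w
  rw [h, ← hw] at hv
  omega

namespace IsRegularOfDegree

variable {G} {r : ℕ} (hreg : G.IsRegularOfDegree r)
include hreg

omit [DecidableEq V] in
lemma neighborFinset_eq_of_subset {v w : V} (h : G.neighborFinset v ⊆ G.neighborFinset w) :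
    G.neighborFinset v = G.neighborFinset w :=
  eq_of_subset_of_card_le h (by simp only [card_neighborFinset_eq_degree, hreg v, hreg w, le_refl])

lemma card_interedges_neighborFinset_compl (v : V) :
    r + 2 * K3deg G v + #(G.interedges (G.neighborFinset v) (insert v (G.neighborFinset v))ᶜ) =
      r * r := by
  have hv : Disjoint {v} (G.neighborFinset v) :=
    disjoint_singleton_left.mpr (G.notMem_neighborFinset_self v)
  calc _ = #(G.interedges (G.neighborFinset v) univ) := by
        rw [← union_compl (insert v (G.neighborFinset v)), insert_eq,
          G.card_interedges_union_right _ disjoint_compl_right, G.card_interedges_union_right _ hv,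
          card_interedges_neighborFinset_singleton, two_mul_K3deg_eq_card_interedges, hreg v]
    _ = r * r := by
        rw [card_interedges_univ_right, sum_congr rfl fun u _ => hreg u, sum_const, smul_eq_mul,
          card_neighborFinset_eq_degree, hreg v]

variable (hirr : Function.Injective (K3deg G))
include hirr

lemma exists_not_adj_of_injective_K3deg {v w : V} (hw : w ∉ insert v (G.neighborFinset v)) :
    ∃ u ∈ G.neighborFinset v, ¬ G.Adj u w := by
  by_contra! h
  have hsub : G.neighborFinset v ⊆ G.neighborFinset w := fun u hu =>
    (G.mem_neighborFinset w u).mpr (h u hu).symm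
  have hvw : v = w := hirr (G.K3deg_eq_of_neighborFinset_eq (hreg.neighborFinset_eq_of_subset hsub))
  exact hw (hvw ▸ mem_insert_self v _)

lemma card_compl_le_card_interedges_compl_of_injective_K3deg (v : V) :
    #(insert v (G.neighborFinset v))ᶜ ≤
      #(Gᶜ.interedges (G.neighborFinset v) (insert v (G.neighborFinset v))ᶜ) := by
  refine card_le_card_of_surjOn Prod.snd fun w hw => ?_
  rw [mem_coe, mem_compl] at hw
  obtain ⟨u, hu, hnadj⟩ := hreg.exists_not_adj_of_injective_K3deg hirr hw
  have huw : u ≠ w := fun h => hw (h ▸ mem_insert_of_mem hu)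
  exact ⟨(u, w), Gᶜ.mk_mem_interedges_iff.mpr ⟨hu, mem_compl.mpr hw, huw, hnadj⟩, rfl⟩

end IsRegularOfDegree

end SimpleGraph

theorem stmt12 {V : Type*} [Fintype V] [DecidableEq V] (G : SimpleGraph V) [DecidableRel G.Adj]
    (n r : ℕ) (hn : Fintype.card V = n) (hreg : G.IsRegularOfDegree r)
    (hirr : ∀ u w : V, K3deg G u = K3deg G w → u = w)
    (v : V) :
    (n : ℤ) - r - 1 ≤ 2 * K3deg G v + (n : ℤ) * r - 2 * r ^ 2 := by
  have hcard : #(insert v (G.neighborFinset v))ᶜ + (r + 1) = n := by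
    rw [← hn, ← card_compl_add_card, card_insert_of_notMem (G.notMem_neighborFinset_self v),
      G.card_neighborFinset_eq_degree, hreg v]
  have hedges := hreg.card_interedges_neighborFinset_compl v
  have hsplit := G.card_interedges_add_card_interedges_compl
    (disjoint_compl_right_iff.mpr (subset_insert v (G.neighborFinset v)))
  have hnonedges := hreg.card_compl_le_card_interedges_compl_of_injective_K3deg hirr v
  rw [G.card_neighborFinset_eq_degree, hreg v] at hsplit
  rw [← hcard]
  push_cast
  zify at hedges hsplit hnonedges
  linarith
end

section
/- There is no 7-regular K3-irregular simple graph. -/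
open Finset

lemma Nat.le_of_mul_pred_lt {q m : ℕ} (h : q * (q - 1) < (m + 1) * m) : q ≤ m := by
  by_contra! hq
  exact absurd (Nat.mul_le_mul (Nat.succ_le_of_lt hq) (Nat.le_sub_one_of_lt hq)) h.not_ge

lemma Finset.sum_le_sum_add_card_sdiff_mul {ι : Type*} [DecidableEq ι] {s t : Finset ι}
    {f : ι → ℕ} {c : ℕ} (h : t ⊆ s) (hf : ∀ i ∈ s \ t, f i ≤ c) :
    ∑ i ∈ s, f i ≤ ∑ i ∈ t, f i + #(s \ t) * c := by
  rw [← sum_sdiff h, add_comm, ← smul_eq_mul]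
  exact Nat.add_le_add_left (sum_le_card_nsmul _ _ _ hf) _

lemma Function.Injective.exists_missing_value {α : Type*} [Fintype α] {f : α → ℕ}
    (hf : Function.Injective f) (hle : ∀ a, f a ≤ Fintype.card α) :
    ∃ m, 2 * (∑ a, f a + m) = Fintype.card α * (Fintype.card α + 1) ∧
      ∀ k ≤ Fintype.card α, k ≠ m → ∃ a, f a = k := by
  have hsub : univ.image f ⊆ range (Fintype.card α + 1) := fun k hk => by
    obtain ⟨a, -, rfl⟩ := mem_image.mp hk
    exact mem_range.mpr (Nat.lt_succ_of_le (hle a))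
  obtain ⟨m, hm⟩ := card_eq_one.mp (by
    rw [card_sdiff_of_subset hsub, card_image_of_injective _ hf, card_range, card_univ]
    omega : #(range (Fintype.card α + 1) \ univ.image f) = 1)
  refine ⟨m, ?_, fun k hk hkm => ?_⟩
  · have hsplit := sum_sdiff hsub (f := fun k => k)
    rw [hm, sum_singleton, sum_image hf.injOn] at hsplit
    have := sum_range_id_mul_two (Fintype.card α + 1)
    rw [Nat.add_sub_cancel] at this
    linarith
  · have : k ∉ range (Fintype.card α + 1) \ univ.image f := by simpa [hm] using hkm
    simpa [Nat.lt_succ_of_le hk] using this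

namespace SimpleGraph

variable {V : Type*} [Fintype V] [DecidableEq V] (G : SimpleGraph V) [DecidableRel G.Adj]

/-- Twice the number of edges of `G` inside `s`. -/
def innerDegSum (s : Finset V) : ℕ := ∑ u ∈ s, #(s ∩ G.neighborFinset u)

lemma sum_card_inter_neighborFinset_comm (s t : Finset V) :
    ∑ u ∈ s, #(t ∩ G.neighborFinset u) = ∑ w ∈ t, #(s ∩ G.neighborFinset w) := by
  have h : ∀ (s : Finset V) u,
      #(s ∩ G.neighborFinset u) = ∑ w ∈ s, if G.Adj w u then 1 else 0 := by
    intro s u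
    rw [← card_filter]
    congr 1
    ext w
    simp [adj_comm]
  simp_rw [h]
  rw [sum_comm]
  simp_rw [adj_comm]

lemma innerDegSum_mono {s t : Finset V} (h : s ⊆ t) : G.innerDegSum s ≤ G.innerDegSum t :=
  (sum_le_sum fun _ _ => card_le_card (inter_subset_inter_right h)).trans
    (sum_le_sum_of_subset h)

lemma innerDegSum_insert {s : Finset V} {a : V} (ha : a ∉ s) :
    G.innerDegSum (insert a s) = G.innerDegSum s + 2 * #(s ∩ G.neighborFinset a) := by
  have hsplit : ∀ u ∈ s, #(insert a s ∩ G.neighborFinset u)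
      = #(s ∩ G.neighborFinset u) + #({a} ∩ G.neighborFinset u) := by
    intro u _
    rw [insert_eq, union_inter_distrib_right, card_union_of_disjoint, add_comm]
    exact (disjoint_singleton_left.mpr ha).mono inter_subset_left inter_subset_left
  have hcomm := G.sum_card_inter_neighborFinset_comm s {a}
  rw [sum_singleton] at hcomm
  rw [innerDegSum, innerDegSum, sum_insert ha, sum_congr rfl hsplit, sum_add_distrib, hcomm,
    insert_inter_of_notMem (G.notMem_neighborFinset_self a)]
  ring

lemma innerDegSum_add_innerDegSum_compl (s : Finset V) :
    G.innerDegSum s + Gᶜ.innerDegSum s = #s * (#s - 1) := by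
  rw [innerDegSum, innerDegSum, ← sum_add_distrib, ← smul_eq_mul, ← sum_const]
  refine sum_congr rfl fun u hu => ?_
  rw [← card_erase_of_mem hu, ← card_filter_add_card_filter_not (s := s.erase u) (p := G.Adj u)]
  congr 1 <;> congr 1 <;> ext w
  · simp only [mem_inter, mem_neighborFinset, mem_filter, mem_erase]
    exact ⟨fun ⟨hw, h⟩ => ⟨⟨h.ne', hw⟩, h⟩, fun ⟨⟨_, hw⟩, h⟩ => ⟨hw, h⟩⟩
  · simp only [mem_inter, mem_neighborFinset, mem_filter, mem_erase, compl_adj]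
    exact ⟨fun ⟨hw, hne, h⟩ => ⟨⟨hne.symm, hw⟩, h⟩,
      fun ⟨⟨hne, hw⟩, h⟩ => ⟨hw, hne.symm, h⟩⟩

lemma innerDegSum_add_mul_card_compl {r : ℕ} (hreg : G.IsRegularOfDegree r) (s : Finset V) :
    G.innerDegSum s + r * #sᶜ = G.innerDegSum sᶜ + r * #s := by
  have hsplit : ∀ s : Finset V, ∑ u ∈ s, #(sᶜ ∩ G.neighborFinset u) + G.innerDegSum s
      = r * #s := by
    intro s
    rw [innerDegSum, ← sum_add_distrib, mul_comm, ← smul_eq_mul, ← sum_const]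
    refine sum_congr rfl fun u _ => ?_
    rw [← hreg u, ← card_neighborFinset_eq_degree, inter_comm, inter_comm s,
      ← sdiff_eq_inter_compl, add_comm, card_inter_add_card_sdiff]
  have h1 := hsplit s
  have h2 := hsplit sᶜ
  rw [compl_compl, ← G.sum_card_inter_neighborFinset_comm] at h2
  omega

lemma card_filter_mem_cliqueFinset_three {v u : V} (h : G.Adj v u) :
    #{t ∈ G.cliqueFinset 3 | v ∈ t ∧ u ∈ t}
      = #(G.neighborFinset v ∩ G.neighborFinset u) := by
  symm
  refine card_bij (fun w _ => {v, u, w}) ?_ ?_ ?_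
  · intro w hw
    simp only [mem_inter, mem_neighborFinset] at hw
    simp [mem_cliqueFinset_iff, is3Clique_triple_iff, h, hw.1, hw.2]
  · intro w hw w' hw' heq
    simp only [mem_inter, mem_neighborFinset] at hw hw'
    have : w' ∈ ({v, u, w} : Finset V) := heq ▸ by simp
    simp only [mem_insert, mem_singleton] at this
    rcases this with rfl | rfl | rfl
    · exact absurd hw'.1 G.irrefl
    · exact absurd hw'.2 G.irrefl
    · rfl
  · intro t ht
    simp only [mem_filter, mem_cliqueFinset_iff] at ht
    obtain ⟨hcl, hvt, hut⟩ := ht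
    have hut' : u ∈ t.erase v := mem_erase.mpr ⟨h.ne', hut⟩
    obtain ⟨w, hw⟩ : ∃ w, (t.erase v).erase u = {w} := card_eq_one.mp (by
      rw [card_erase_of_mem hut', card_erase_of_mem hvt, hcl.card_eq])
    have hwt : w ∈ (t.erase v).erase u := hw ▸ mem_singleton_self w
    simp only [mem_erase] at hwt
    refine ⟨w, ?_, ?_⟩
    · simp only [mem_inter, mem_neighborFinset]
      exact ⟨hcl.isClique hvt hwt.2.2 (Ne.symm hwt.2.1),
        hcl.isClique hut hwt.2.2 (Ne.symm hwt.1)⟩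
    · rw [← hw, insert_erase hut', insert_erase hvt]

lemma innerDegSum_neighborFinset (v : V) :
    G.innerDegSum (G.neighborFinset v) = 2 * K3deg G v := by
  have hdc := sum_card_bipartiteAbove_eq_sum_card_bipartiteBelow (fun u (t : Finset V) => u ∈ t)
    (s := G.neighborFinset v) (t := {t ∈ G.cliqueFinset 3 | v ∈ t})
  simp only [bipartiteAbove, bipartiteBelow, filter_filter] at hdc
  rw [innerDegSum, K3deg, mul_comm, ← smul_eq_mul, ← sum_const]
  convert hdc using 1
  · refine sum_congr rfl fun u hu => ?_
    rw [← G.card_filter_mem_cliqueFinset_three (G.mem_neighborFinset v u |>.mp hu)]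
  · refine sum_congr rfl fun t ht => ?_
    simp only [mem_filter, mem_cliqueFinset_iff] at ht
    have : {w ∈ G.neighborFinset v | w ∈ t} = t.erase v := by
      ext w
      simp only [mem_filter, mem_neighborFinset, mem_erase]
      exact ⟨fun ⟨hw, hwt⟩ => ⟨hw.ne', hwt⟩,
        fun ⟨hne, hwt⟩ => ⟨ht.1.isClique ht.2 hwt (Ne.symm hne), hwt⟩⟩
    rw [this, card_erase_of_mem ht.2, ht.1.card_eq]

lemma sum_K3deg : ∑ v, K3deg G v = 3 * #(G.cliqueFinset 3) := by
  have hdc := sum_card_bipartiteAbove_eq_sum_card_bipartiteBelow (fun v (t : Finset V) => v ∈ t)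
    (s := univ) (t := G.cliqueFinset 3)
  simp only [bipartiteAbove, bipartiteBelow, filter_mem_eq_inter, univ_inter] at hdc
  rw [mul_comm, ← smul_eq_mul, ← sum_const, ← sum_congr rfl fun t ht =>
    (mem_cliqueFinset_iff.mp ht).card_eq]
  exact hdc

lemma compl_insert_neighborFinset (v : V) :
    (insert v (G.neighborFinset v))ᶜ = Gᶜ.neighborFinset v := by
  rw [neighborFinset_compl, compl_insert, sdiff_singleton_eq_erase]

variable {G} {r : ℕ}

lemma card_neighborFinset_compl (hreg : G.IsRegularOfDegree r) (v : V) :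
    #(Gᶜ.neighborFinset v) = Fintype.card V - 1 - r := by
  rw [card_neighborFinset_eq_degree, hreg.compl v]

lemma innerDegSum_neighborFinset_compl (hreg : G.IsRegularOfDegree r) (v : V) :
    G.innerDegSum (Gᶜ.neighborFinset v) + r * r
      = 2 * K3deg G v + r * #(Gᶜ.neighborFinset v) + r := by
  have h := G.innerDegSum_add_mul_card_compl hreg (insert v (G.neighborFinset v))
  rw [compl_insert_neighborFinset, innerDegSum_insert _ (G.notMem_neighborFinset_self v),
    inter_self, innerDegSum_neighborFinset, card_insert_of_notMem (G.notMem_neighborFinset_self v),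
    card_neighborFinset_eq_degree, hreg v, mul_add_one] at h
  omega

lemma two_mul_K3deg_add_two_mul_K3deg_compl (hreg : G.IsRegularOfDegree r) (v : V) :
    2 * K3deg G v + 2 * K3deg Gᶜ v + r * (Fintype.card V - 1 - r) + r
      = (Fintype.card V - 1 - r) * (Fintype.card V - 1 - r - 1) + r * r := by
  have h1 := innerDegSum_neighborFinset_compl hreg v
  have h2 := G.innerDegSum_add_innerDegSum_compl (Gᶜ.neighborFinset v)
  rw [Gᶜ.innerDegSum_neighborFinset v] at h2
  rw [card_neighborFinset_compl hreg] at h1 h2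
  omega

lemma injective_K3deg_compl (hreg : G.IsRegularOfDegree r) (hinj : Function.Injective (K3deg G)) :
    Function.Injective (K3deg Gᶜ) := fun u w h => hinj <| by
  have hu := two_mul_K3deg_add_two_mul_K3deg_compl hreg u
  have hw := two_mul_K3deg_add_two_mul_K3deg_compl hreg w
  omega

lemma inter_neighborFinset_subset_erase (u v : V) :
    G.neighborFinset u ∩ G.neighborFinset v ⊆ (G.neighborFinset u).erase v := by
  intro w hw
  simp only [mem_inter, mem_erase, mem_neighborFinset] at hw ⊢
  exact ⟨hw.2.ne', hw.1⟩

lemma innerDegSum_neighborFinset_of_adj {u v : V} (h : G.Adj u v) :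
    G.innerDegSum (G.neighborFinset u)
      = G.innerDegSum ((G.neighborFinset u).erase v)
        + 2 * #(G.neighborFinset u ∩ G.neighborFinset v) := by
  conv_lhs => rw [← insert_erase ((G.mem_neighborFinset u v).mpr h)]
  rw [innerDegSum_insert _ (notMem_erase v _), erase_inter,
    erase_eq_of_notMem fun hv => G.notMem_neighborFinset_self v (mem_of_mem_inter_right hv)]

lemma card_inter_neighborFinset_le_K3deg {u v : V} (h : G.Adj u v) :
    #(G.neighborFinset u ∩ G.neighborFinset v) ≤ K3deg G u := by
  have := innerDegSum_neighborFinset_of_adj h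
  rw [innerDegSum_neighborFinset] at this
  omega

lemma K3deg_eq_of_erase_eq {u v : V} (h : G.Adj u v)
    (huv : (G.neighborFinset u).erase v = (G.neighborFinset v).erase u) :
    K3deg G u = K3deg G v := by
  have hu := innerDegSum_neighborFinset_of_adj h
  have hv := innerDegSum_neighborFinset_of_adj h.symm
  rw [huv, inter_comm] at hu
  rw [innerDegSum_neighborFinset] at hu hv
  omega

lemma K3deg_le_K3deg_add_card_inter {u v : V} (h : G.Adj v u)
    (hcard : #(G.neighborFinset v) = #(G.neighborFinset v ∩ G.neighborFinset u) + 2) :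
    K3deg G v ≤ K3deg G u + #(G.neighborFinset v ∩ G.neighborFinset u) := by
  have hCu : G.neighborFinset v ∩ G.neighborFinset u ⊆ (G.neighborFinset u).erase v := by
    rw [inter_comm]; exact G.inter_neighborFinset_subset_erase u v
  obtain ⟨w, hwC, hw⟩ := exists_eq_insert_iff.mpr ⟨G.inter_neighborFinset_subset_erase v u, by
    rw [card_erase_of_mem ((G.mem_neighborFinset v u).mpr h)]; omega⟩
  have hv := innerDegSum_neighborFinset_of_adj h
  rw [← hw, innerDegSum_insert _ hwC] at hv
  have hu := innerDegSum_neighborFinset_of_adj h.symm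
  rw [inter_comm] at hu
  have hmono := G.innerDegSum_mono hCu
  have hw' := card_le_card (inter_subset_left (s₁ := G.neighborFinset v ∩ G.neighborFinset u)
    (s₂ := G.neighborFinset w))
  rw [innerDegSum_neighborFinset] at hu hv
  omega

lemma card_inter_neighborFinset_mul_pred_le (s : Finset V) (z : V) :
    #(s ∩ G.neighborFinset z) * (#(s ∩ G.neighborFinset z) - 1)
      ≤ 2 * K3deg G z + Gᶜ.innerDegSum s := by
  rw [← G.innerDegSum_add_innerDegSum_compl, ← G.innerDegSum_neighborFinset]
  exact add_le_add (G.innerDegSum_mono inter_subset_right) (Gᶜ.innerDegSum_mono inter_subset_left)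

section Irregular

variable (hinj : Function.Injective (K3deg G)) (hreg : G.IsRegularOfDegree r)
include hinj hreg

lemma card_inter_neighborFinset_add_two_le {u v : V} (h : G.Adj u v) :
    #(G.neighborFinset u ∩ G.neighborFinset v) + 2 ≤ r := by
  by_contra! hlt
  have hu : #((G.neighborFinset u).erase v) = r - 1 := by
    rw [card_erase_of_mem ((G.mem_neighborFinset u v).mpr h), card_neighborFinset_eq_degree,
      hreg u]
  have hv : #((G.neighborFinset v).erase u) = r - 1 := by
    rw [card_erase_of_mem ((G.mem_neighborFinset v u).mpr h.symm),
      card_neighborFinset_eq_degree, hreg v]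
  have eu := eq_of_subset_of_card_le (G.inter_neighborFinset_subset_erase u v) (by omega)
  have hCv : G.neighborFinset u ∩ G.neighborFinset v ⊆ (G.neighborFinset v).erase u := by
    rw [inter_comm]; exact G.inter_neighborFinset_subset_erase v u
  have ev := eq_of_subset_of_card_le hCv (by omega)
  exact h.ne (hinj (K3deg_eq_of_erase_eq h (eu.symm.trans ev)))

lemma two_mul_K3deg_add_two_mul_le (v : V) : 2 * K3deg G v + 2 * r ≤ r * r := by
  have hb : ∑ u ∈ G.neighborFinset v, (#(G.neighborFinset v ∩ G.neighborFinset u) + 2)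
      ≤ ∑ _u ∈ G.neighborFinset v, r := sum_le_sum fun u hu =>
    card_inter_neighborFinset_add_two_le hinj hreg ((G.mem_neighborFinset v u).mp hu)
  rw [sum_add_distrib, sum_const, sum_const, card_neighborFinset_eq_degree, hreg v, smul_eq_mul,
    smul_eq_mul, ← innerDegSum, innerDegSum_neighborFinset] at hb
  omega

omit hreg in
lemma card_le_of_K3deg_le {b : ℕ} (hb : ∀ v, K3deg G v ≤ b) : Fintype.card V ≤ b + 1 := by
  simpa using card_le_card_of_injOn (K3deg G) (s := univ) (t := range (b + 1))
    (fun v _ => mem_range.mpr (Nat.lt_succ_of_le (hb v))) hinj.injOn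

lemma two_mul_card_add_two_mul_le [Nonempty V] :
    2 * Fintype.card V + 2 * r ≤ r * r + 2 := by
  obtain ⟨v⟩ := ‹Nonempty V›
  have hv := two_mul_K3deg_add_two_mul_le hinj hreg v
  have := card_le_of_K3deg_le hinj (b := (r * r - 2 * r) / 2) fun u => by
    have := two_mul_K3deg_add_two_mul_le hinj hreg u
    omega
  omega

/-- Otherwise all but at most one neighbour `u` of `v` have `r - 2` common neighbours with `v`;
these `u` and `v` are `r` vertices with triangle-degrees in `[K3deg G v + 2 - r, K3deg G v]`. -/
lemma two_mul_K3deg_add_two_mul_add_two_le (hr : 2 ≤ r) (v : V) :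
    2 * K3deg G v + 2 * r + 2 ≤ r * r := by
  by_contra! hlt
  set F := {u ∈ G.neighborFinset v | #(G.neighborFinset v ∩ G.neighborFinset u) + 2 = r}
  have hsum : ∑ u ∈ G.neighborFinset v, (#(G.neighborFinset v ∩ G.neighborFinset u) + 2
      + if ¬ #(G.neighborFinset v ∩ G.neighborFinset u) + 2 = r then 1 else 0)
      ≤ ∑ _u ∈ G.neighborFinset v, r := sum_le_sum fun u hu => by
    have := card_inter_neighborFinset_add_two_le hinj hreg ((G.mem_neighborFinset v u).mp hu)
    split_ifs <;> omega
  rw [sum_add_distrib, sum_add_distrib, ← card_filter, sum_const, sum_const, ← innerDegSum,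
    innerDegSum_neighborFinset, card_neighborFinset_eq_degree, hreg v, smul_eq_mul,
    smul_eq_mul] at hsum
  have hF := card_filter_add_card_filter_not (s := G.neighborFinset v)
    (p := fun u => #(G.neighborFinset v ∩ G.neighborFinset u) + 2 = r)
  rw [card_neighborFinset_eq_degree, hreg v] at hF
  have hmaps : ∀ u ∈ insert v F, K3deg G u ∈ Icc (K3deg G v + 2 - r) (K3deg G v) := by
    intro u hu
    rw [mem_Icc]
    rcases mem_insert.mp hu with rfl | hu
    · omega
    · obtain ⟨hvu, hcodeg⟩ := mem_filter.mp hu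
      have hle := K3deg_le_K3deg_add_card_inter ((G.mem_neighborFinset v u).mp hvu)
        (by rw [card_neighborFinset_eq_degree, hreg v]; omega)
      have hu_le := two_mul_K3deg_add_two_mul_le hinj hreg u
      omega
  have := card_le_card_of_injOn (K3deg G) hmaps hinj.injOn
  rw [card_insert_of_notMem fun hv => G.notMem_neighborFinset_self v (mem_filter.mp hv).1,
    Nat.card_Icc] at this
  omega

lemma two_mul_K3deg_le_sum_K3deg_add {v : V} {A : Finset V} (hA : A ⊆ G.neighborFinset v) :
    2 * K3deg G v ≤ ∑ u ∈ A, K3deg G u + (r - #A) * (r - 2) := by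
  rw [← innerDegSum_neighborFinset, innerDegSum]
  calc _ ≤ ∑ u ∈ A, #(G.neighborFinset v ∩ G.neighborFinset u)
        + #(G.neighborFinset v \ A) * (r - 2) :=
        sum_le_sum_add_card_sdiff_mul hA fun u hu => by
          have := card_inter_neighborFinset_add_two_le hinj hreg
            ((G.mem_neighborFinset v u).mp (mem_sdiff.mp hu).1)
          omega
    _ ≤ _ := by
        rw [card_sdiff_of_subset hA, card_neighborFinset_eq_degree, hreg v]
        gcongr with u hu
        rw [inter_comm]
        exact card_inter_neighborFinset_le_K3deg ((G.mem_neighborFinset v u).mp (hA hu)).symm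

/-- Otherwise `N o = O \ {o}` for `O = Gᶜ.neighborFinset v`, and the edges inside `O`, counted
once around `o` and once around `v`, give `K3deg G o = K3deg G v`. -/
lemma card_inter_neighborFinset_lt_of_mem_compl {v o : V}
    (hO : #(Gᶜ.neighborFinset v) = r + 1) (ho : o ∈ Gᶜ.neighborFinset v) :
    #(Gᶜ.neighborFinset v ∩ G.neighborFinset o) < r := by
  by_contra! hge
  have hNo : #(G.neighborFinset o) = r := by rw [card_neighborFinset_eq_degree, hreg o]
  have hsub : G.neighborFinset o ⊆ (Gᶜ.neighborFinset v).erase o := by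
    rw [← eq_of_subset_of_card_le (inter_subset_right (s₁ := Gᶜ.neighborFinset v)
      (s₂ := G.neighborFinset o)) (by omega)]
    intro w hw
    refine mem_erase.mpr ⟨?_, mem_of_mem_inter_left hw⟩
    rintro rfl
    exact G.notMem_neighborFinset_self w (mem_of_mem_inter_right hw)
  have heq := eq_of_subset_of_card_le hsub (by rw [card_erase_of_mem ho]; omega)
  have hids : G.innerDegSum (Gᶜ.neighborFinset v) = 2 * K3deg G o + 2 * r := by
    rw [← insert_erase ho, ← heq, innerDegSum_insert _ (G.notMem_neighborFinset_self o),
      inter_self, innerDegSum_neighborFinset, hNo]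
  have hformula := innerDegSum_neighborFinset_compl hreg v
  rw [hO, mul_add_one] at hformula
  obtain rfl : o = v := hinj (by omega)
  exact Gᶜ.notMem_neighborFinset_self o ho

end Irregular

section DegreeSeven

variable (hinj : Function.Injective (K3deg G)) (hreg : G.IsRegularOfDegree 7)
include hinj hreg

lemma card_eq_sixteen_of_isRegularOfDegree_seven [Nonempty V] : Fintype.card V = 16 := by
  obtain ⟨v⟩ := ‹Nonempty V›
  have hlt : 7 < Fintype.card V := hreg v ▸ G.degree_lt_card_verts v
  have heven := G.sum_degrees_eq_twice_card_edges
  rw [sum_congr rfl fun v _ => hreg v, sum_const, card_univ, smul_eq_mul] at heven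
  have hG : Fintype.card V ≤ 17 := card_le_of_K3deg_le hinj fun u => by
    have := two_mul_K3deg_add_two_mul_add_two_le hinj hreg (by norm_num) u
    omega
  have hGc := two_mul_card_add_two_mul_le (injective_K3deg_compl hreg hinj) hreg.compl
  generalize Fintype.card V = n at *
  interval_cases n <;> omega

lemma card_filter_neighborFinset_K3deg_le_four_le_two {v : V} (hv : K3deg G v = 15) :
    #{u ∈ G.neighborFinset v | K3deg G u ≤ 4} ≤ 2 := by
  set A := {u ∈ G.neighborFinset v | K3deg G u ≤ 4}
  have h := two_mul_K3deg_le_sum_K3deg_add hinj hreg (A := A) (filter_subset _ _)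
  rw [← sum_image (f := fun k => k) hinj.injOn, ← card_image_of_injective A hinj, hv] at h
  have key : ∀ S ∈ (range 5).powerset, 30 ≤ ∑ k ∈ S, k + (7 - #S) * 5 → #S ≤ 2 := by
    decide
  rw [← card_image_of_injective A hinj]
  refine key _ (mem_powerset.mpr fun k hk => ?_) h
  obtain ⟨u, hu, rfl⟩ := mem_image.mp hk
  exact mem_range.mpr (Nat.lt_succ_of_le (mem_filter.mp hu).2)

variable (hn : Fintype.card V = 16)
include hn

omit hinj in
lemma K3deg_add_K3deg_compl_eq (v : V) : K3deg G v + K3deg Gᶜ v = 21 := by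
  have := two_mul_K3deg_add_two_mul_K3deg_compl hreg v
  rw [hn] at this
  omega

omit hinj in
lemma card_inter_mul_pred_add_two_mul_K3deg_le (v z : V) :
    #(Gᶜ.neighborFinset v ∩ G.neighborFinset z)
        * (#(Gᶜ.neighborFinset v ∩ G.neighborFinset z) - 1)
      + 2 * K3deg G v ≤ 2 * K3deg G z + 42 := by
  have := G.card_inter_neighborFinset_mul_pred_le (Gᶜ.neighborFinset v) z
  have := K3deg_add_K3deg_compl_eq hreg hn v
  rw [Gᶜ.innerDegSum_neighborFinset] at *
  omega

lemma two_mul_K3deg_add_fourteen_le_sum {v : V} {B : Finset V} (hB : B ⊆ Gᶜ.neighborFinset v) :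
    2 * K3deg G v + 14
      ≤ ∑ z ∈ B, #(Gᶜ.neighborFinset v ∩ G.neighborFinset z) + (8 - #B) * 6 := by
  have hO : #(Gᶜ.neighborFinset v) = 8 := by rw [card_neighborFinset_compl hreg, hn]
  have hG := innerDegSum_neighborFinset_compl hreg v
  have hsum := sum_le_sum_add_card_sdiff_mul hB (c := 6) fun o ho => Nat.le_of_lt_succ
    (card_inter_neighborFinset_lt_of_mem_compl hinj hreg hO (mem_sdiff.mp ho).1)
  rw [← innerDegSum, card_sdiff_of_subset hB, hO] at hsum
  rw [hO] at hG
  omega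

lemma false_of_K3deg_eq_sixteen_of_K3deg_eq_zero {v z : V} (hv : K3deg G v = 16)
    (hz : K3deg G z = 0) : False := by
  have hzv : ¬ G.Adj v z := fun h => by
    have := two_mul_K3deg_le_sum_K3deg_add hinj hreg
      (singleton_subset_iff.mpr ((G.mem_neighborFinset v z).mpr h))
    simp [hv, hz] at this
  have hzO : z ∈ Gᶜ.neighborFinset v := by
    rw [mem_neighborFinset, compl_adj]
    exact ⟨by rintro rfl; omega, hzv⟩
  have hqz : #(Gᶜ.neighborFinset v ∩ G.neighborFinset z) ≤ 3 := Nat.le_of_mul_pred_lt <| by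
    have := card_inter_mul_pred_add_two_mul_K3deg_le hreg hn v z
    omega
  have := two_mul_K3deg_add_fourteen_le_sum hinj hreg hn (singleton_subset_iff.mpr hzO)
  rw [sum_singleton, card_singleton] at this
  omega

lemma card_filter_compl_neighborFinset_K3deg_le_four_le_two {v : V} (hv : K3deg G v = 15) :
    #{u ∈ Gᶜ.neighborFinset v | K3deg G u ≤ 4} ≤ 2 := by
  set B := {u ∈ Gᶜ.neighborFinset v | K3deg G u ≤ 4}
  -- at most `4` neighbours in `Gᶜ.neighborFinset v`, or `5` when `K3deg G z = 4`
  have hq : ∀ z ∈ B, #(Gᶜ.neighborFinset v ∩ G.neighborFinset z) ≤ 4 + K3deg G z / 4 :=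
    fun z hz => Nat.le_of_mul_pred_lt <| by
      have := card_inter_mul_pred_add_two_mul_K3deg_le hreg hn v z
      obtain h | h :
          K3deg G z / 4 = 0 ∧ K3deg G z ≤ 3 ∨ K3deg G z / 4 = 1 ∧ K3deg G z = 4 := by
        have := (mem_filter.mp hz).2
        omega
      all_goals rw [h.1]; omega
  have hsum := two_mul_K3deg_add_fourteen_le_sum hinj hreg hn (B := B) (filter_subset _ _)
  have hsumB := sum_le_sum hq
  rw [← sum_image (g := K3deg G) (f := fun k => 4 + k / 4) hinj.injOn] at hsumB
  have key :
      ∀ S ∈ (range 5).powerset, 44 ≤ ∑ k ∈ S, (4 + k / 4) + (8 - #S) * 6 → #S ≤ 2 := by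
    decide
  rw [← card_image_of_injective B hinj] at hsum ⊢
  refine key _ (mem_powerset.mpr fun k hk => ?_) (by omega)
  obtain ⟨u, hu, rfl⟩ := mem_image.mp hk
  exact mem_range.mpr (Nat.lt_succ_of_le (mem_filter.mp hu).2)

lemma false_of_K3deg_eq_fifteen {v : V} (hv : K3deg G v = 15)
    (hlow : ∀ k ≤ 4, ∃ z, K3deg G z = k) : False := by
  have hA := card_filter_neighborFinset_K3deg_le_four_le_two hinj hreg hv
  have hB := card_filter_compl_neighborFinset_K3deg_le_four_le_two hinj hreg hn hv
  set A := {u ∈ G.neighborFinset v | K3deg G u ≤ 4}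
  set B := {u ∈ Gᶜ.neighborFinset v | K3deg G u ≤ 4}
  have hlow' : range 5 ⊆ (A ∪ B).image (K3deg G) := fun k hk => by
    have hk4 := Nat.le_of_lt_succ (mem_range.mp hk)
    obtain ⟨z, rfl⟩ := hlow k hk4
    refine mem_image_of_mem _ ?_
    by_cases h : G.Adj v z
    · exact mem_union_left _ (mem_filter.mpr ⟨(G.mem_neighborFinset v z).mpr h, hk4⟩)
    · refine mem_union_right _ (mem_filter.mpr ⟨?_, hk4⟩)
      rw [mem_neighborFinset, compl_adj]
      exact ⟨by rintro rfl; omega, h⟩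
  have := calc 5 = #(range 5) := (card_range 5).symm
    _ ≤ #((A ∪ B).image (K3deg G)) := card_le_card hlow'
    _ ≤ #(A ∪ B) := card_image_le
    _ ≤ #A + #B := card_union_le A B
  omega

lemma false_of_card_eq_sixteen : False := by
  have ht : ∀ v, K3deg G v ≤ Fintype.card V := fun v => by
    have := two_mul_K3deg_add_two_mul_add_two_le hinj hreg (by norm_num) v
    omega
  obtain ⟨m, hsum, hmem⟩ := hinj.exists_missing_value ht
  -- `hsum` says `2 * (3 * #triangles + m) = 16 * 17`, so `m % 3 = 1`
  rw [hn, G.sum_K3deg] at hsum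
  rw [hn] at hmem
  rcases eq_or_ne m 16 with rfl | hm
  · obtain ⟨v, hv⟩ := hmem 15 (by norm_num) (by norm_num)
    exact false_of_K3deg_eq_fifteen hinj hreg hn hv fun k hk => hmem k (by omega) (by omega)
  · obtain ⟨v, hv⟩ := hmem 16 le_rfl hm.symm
    obtain ⟨z, hz⟩ := hmem 0 (by omega) (by omega)
    exact false_of_K3deg_eq_sixteen_of_K3deg_eq_zero hinj hreg hn hv hz

end DegreeSeven

end SimpleGraph

theorem stmt15 {V : Type*} [Fintype V] [DecidableEq V] [Nonempty V]
    (G : SimpleGraph V) [DecidableRel G.Adj]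
    (hreg : G.IsRegularOfDegree 7) :
    ¬ (∀ u w : V, K3deg G u = K3deg G w → u = w) := fun hinj =>
  G.false_of_card_eq_sixteen hinj hreg (G.card_eq_sixteen_of_isRegularOfDegree_seven hinj hreg)
end
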